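/- arXiv:1407.6650 — 3 statements merged into one kernel-verified Lean document; each statement's English description precedes it below -/
import Mathlib

section
/- For every L ≥ 2 and every configuration σ ∈ S on the torus Λ = (ℤ/LZ)², the number of down-left corners of its Peierls contour equals the number of up-right corners: n_dl(σ) = n_ur(σ). -/
open Real Filter MeasureTheory

noncomputable section

/-- A site of the 2d discrete torus `(ℤ/Lℤ)²`. -/
abbrev Site (L : ℕ) := ZMod L × ZMod L

/-- A spin configuration on the torus, `true = +1`, `false = -1`. -/
abbrev Cfg (L : ℕ) := Site L → Bool

/-- The real spin value of a Boolean spin. -/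
def spin (b : Bool) : ℝ := if b then 1 else -1

/-- The up neighbor. -/
def upN {L : ℕ} (x : Site L) : Site L := (x.1, x.2 + 1)
/-- The right neighbor. -/
def rtN {L : ℕ} (x : Site L) : Site L := (x.1 + 1, x.2)
/-- The down neighbor. -/
def dnN {L : ℕ} (x : Site L) : Site L := (x.1, x.2 - 1)
/-- The left neighbor. -/
def lfN {L : ℕ} (x : Site L) : Site L := (x.1 - 1, x.2)

/-- The pair Hamiltonian `H(σ,τ) = −∑_x [J σ_x (τ_{x^u} + τ_{x^r}) + q σ_x τ_x]`. -/
def pairH (L : ℕ) [NeZero L] (J q : ℝ) (σ τ : Cfg L) : ℝ :=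
  - ∑ x : Site L, (J * spin (σ x) * (spin (τ (upN x)) + spin (τ (rtN x)))
      + q * spin (σ x) * spin (τ x))

/-- The normalization `Z_σ = ∑_τ e^{−H(σ,τ)}`. -/
def Zconf (L : ℕ) [NeZero L] (J q : ℝ) (σ : Cfg L) : ℝ :=
  ∑ τ : Cfg L, Real.exp (-(pairH L J q σ τ))

/-- The PCA transition probabilities `P(σ,τ) = e^{−H(σ,τ)}/Z_σ`. -/
def Ptrans (L : ℕ) [NeZero L] (J q : ℝ) (σ τ : Cfg L) : ℝ :=
  Real.exp (-(pairH L J q σ τ)) / Zconf L J q σ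

/-- `Z_PCA = ∑_σ Z_σ`. -/
def Zpca (L : ℕ) [NeZero L] (J q : ℝ) : ℝ := ∑ σ : Cfg L, Zconf L J q σ

/-- The PCA stationary measure `π_PCA(σ) = Z_σ / Z_PCA`. -/
def piPCA (L : ℕ) [NeZero L] (J q : ℝ) (σ : Cfg L) : ℝ := Zconf L J q σ / Zpca L J q

/-- The Ising Hamiltonian `H_G(σ) = −J ∑_{(x,y)} σ_x σ_y`, the sum over (unordered)
nearest-neighbor pairs of the torus, each pair being counted once via its up/right bond. -/
def isingH (L : ℕ) [NeZero L] (J : ℝ) (σ : Cfg L) : ℝ :=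
  - J * ∑ x : Site L, spin (σ x) * (spin (σ (upN x)) + spin (σ (rtN x)))

/-- The Ising partition function. -/
def Zg (L : ℕ) [NeZero L] (J : ℝ) : ℝ := ∑ σ : Cfg L, Real.exp (-(isingH L J σ))

/-- The Ising Gibbs measure `π_G(σ) = e^{−H_G(σ)}/Z_G`. -/
def piG (L : ℕ) [NeZero L] (J : ℝ) (σ : Cfg L) : ℝ := Real.exp (-(isingH L J σ)) / Zg L J

/-- Total variation distance between two measures on configuration space. -/
def tv (L : ℕ) [NeZero L] (μ ν : Cfg L → ℝ) : ℝ := (1/2) * ∑ σ : Cfg L, |μ σ - ν σ|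

/-- The all-plus configuration. -/
def plusCfg (L : ℕ) : Cfg L := fun _ => true
/-- The all-minus configuration. -/
def minusCfg (L : ℕ) : Cfg L := fun _ => false

/-- The number of down-left corners of the Peierls contour of `σ`: sites `x` such that
both bonds `{x,x^d}` and `{x,x^l}` belong to `γ(σ)`. -/
def nDL (L : ℕ) [NeZero L] (σ : Cfg L) : ℕ :=
  (Finset.univ.filter fun x : Site L => σ x ≠ σ (dnN x) ∧ σ x ≠ σ (lfN x)).card

/-- The number of up-right corners of the Peierls contour of `σ`: sites `x` such that
both bonds `{x,x^u}` and `{x,x^r}` belong to `γ(σ)`. -/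
def nUR (L : ℕ) [NeZero L] (σ : Cfg L) : ℕ :=
  (Finset.univ.filter fun x : Site L => σ x ≠ σ (upN x) ∧ σ x ≠ σ (rtN x)).card

/-- The total length `l(σ) = |γ(σ)|` of the Peierls contour of `σ`: the number of
nearest-neighbor bonds whose endpoints carry opposite spins (each bond counted once,
via its lower/left endpoint). -/
def contourLen (L : ℕ) [NeZero L] (σ : Cfg L) : ℕ :=
  (Finset.univ.filter fun x : Site L => σ x ≠ σ (upN x)).card +
  (Finset.univ.filter fun x : Site L => σ x ≠ σ (rtN x)).card


/-! For three spins, `2 [s ≠ t ∧ s ≠ u] + [t ≠ u] = [s ≠ t] + [s ≠ u]`. Summed over a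
finite abelian group with `t = f (x + a)`, `u = f (x + b)`, this expresses the number of
corners with arms `a, b` through three counts of disagreeing pairs, each invariant under
translation. Reversing both arms only translates these pairs, so it does not change the number
of corners; down-left corners are the reversal of up-right corners. -/

open Finset

section Corners

variable {G : Type*} [AddCommGroup G] [Fintype G] (f : G → Bool)

def disagreeCount (a b : G) : ℕ := #{x | f (x + a) ≠ f (x + b)}

def cornerCount (a b : G) : ℕ := #{x | f x ≠ f (x + a) ∧ f x ≠ f (x + b)}

lemma disagreeCount_comm (a b : G) : disagreeCount f a b = disagreeCount f b a := by
  simp only [disagreeCount, ne_comm]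

lemma disagreeCount_add_right (a b c : G) :
    disagreeCount f (a + c) (b + c) = disagreeCount f a b := by
  simp only [disagreeCount, ← add_assoc]
  exact card_equiv (Equiv.addRight c) fun x => by simp [add_right_comm]

lemma cornerCount_two_mul_add_disagreeCount (a b : G) :
    2 * cornerCount f a b + disagreeCount f a b = disagreeCount f 0 a + disagreeCount f 0 b := by
  simp only [cornerCount, disagreeCount, add_zero, card_filter, mul_sum, ← sum_add_distrib]
  refine sum_congr rfl fun x _ => ?_
  cases f x <;> cases f (x + a) <;> cases f (x + b) <;> rfl

lemma cornerCount_neg (a b : G) : cornerCount f (-a) (-b) = cornerCount f a b := by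
  have hpair : disagreeCount f (-a) (-b) = disagreeCount f a b := by
    rw [← disagreeCount_add_right f _ _ (a + b), disagreeCount_comm]
    congr 1 <;> abel
  have hbond (c : G) : disagreeCount f 0 (-c) = disagreeCount f 0 c := by
    rw [← disagreeCount_add_right f _ _ c, disagreeCount_comm]
    simp
  have h := cornerCount_two_mul_add_disagreeCount f (-a) (-b)
  rw [hpair, hbond, hbond, ← cornerCount_two_mul_add_disagreeCount] at h
  omega

end Corners

section Neighbors

variable {L : ℕ} (x : Site L)

lemma upN_eq_add : upN x = x + (0, 1) := by ext <;> simp [upN]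

lemma rtN_eq_add : rtN x = x + (1, 0) := by ext <;> simp [rtN]

lemma dnN_eq_add : dnN x = x + -(0, 1) := by ext <;> simp [dnN, sub_eq_add_neg]

lemma lfN_eq_add : lfN x = x + -(1, 0) := by ext <;> simp [lfN, sub_eq_add_neg]

end Neighbors

theorem stmt6_general (L : ℕ) [NeZero L] (σ : Cfg L) : nDL L σ = nUR L σ := by
  have hdl : nDL L σ = cornerCount σ (-(0, 1)) (-(1, 0)) := by
    simp only [nDL, cornerCount, dnN_eq_add, lfN_eq_add]
  have hur : nUR L σ = cornerCount σ (0, 1) (1, 0) := by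
    simp only [nUR, cornerCount, upN_eq_add, rtN_eq_add]
  rw [hdl, hur, cornerCount_neg]

/-- For every `L ≥ 2` and every configuration `σ` on the torus,
the number of down-left corners of the Peierls contour equals the number of up-right
corners: `n_dl(σ) = n_ur(σ)`. -/
theorem stmt6 (L : ℕ) [NeZero L] (hL : 2 ≤ L) (σ : Cfg L) : nDL L σ = nUR L σ :=
  stmt6_general L σ
end
end

section
/- For every L ≥ 2, all J, q > 0, and every configuration σ ∈ S, the PCA normalization factor has the explicit contour representation Z_σ = ∑_{τ∈S} e^{−H(σ,τ)} = 2^{L²} [cosh(2J−q)]^{n_dl(σ)} [cosh(q)]^{l(σ) − 2 n_dl(σ)} [cosh(2J+q)]^{L² − l(σ) + n_dl(σ)}. -/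
open Real Filter MeasureTheory

noncomputable section

/-! Given `σ`, the exponent `-H(σ,τ)` is linear in `τ`: after reindexing the bond sums it reads
`∑_y h_y τ_y` with the local field `h_y = J (σ_{y^d} + σ_{y^l}) + q σ_y`, so the spins of `τ`
decouple and `Z_σ = ∏_y 2 cosh h_y`. Up to sign, `h_y` equals `2J - q`, `q` or `2J + q` according
as both, one or none of the bonds `{y, y^d}`, `{y, y^l}` lie on the contour `γ(σ)`; counting the
sites of each kind by inclusion–exclusion gives the three exponents. -/

open Finset

lemma sum_exp_sum_mul_spin {ι : Type*} [Fintype ι] [DecidableEq ι] (h : ι → ℝ) :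
    ∑ τ : ι → Bool, Real.exp (∑ y, h y * spin (τ y)) = ∏ y, 2 * Real.cosh (h y) := by
  have hsite : ∀ c : ℝ, ∑ b : Bool, Real.exp (c * spin b) = 2 * Real.cosh c := fun c => by
    simp only [Fintype.sum_bool, spin, if_true, Bool.false_eq_true, if_false, Real.cosh_eq]
    ring_nf
  simp_rw [Real.exp_sum, ← hsite, Fintype.prod_sum]

lemma prod_ite_ite_eq_rpow {ι : Type*} [Fintype ι] (P Q : ι → Prop) [DecidablePred P]
    [DecidablePred Q] {a b c : ℝ} (ha : 0 < a) (hb : 0 < b) (hc : 0 < c) :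
    ∏ i, (if P i then (if Q i then a else b) else (if Q i then b else c)) =
      a ^ #{i | P i ∧ Q i} * b ^ (((#{i | P i} + #{i | Q i} : ℕ) : ℝ) - 2 * #{i | P i ∧ Q i})
        * c ^ ((Fintype.card ι : ℝ) - ((#{i | P i} + #{i | Q i} : ℕ) : ℝ) + #{i | P i ∧ Q i}) := by
  have hfactor : ∀ i, (if P i then (if Q i then a else b) else (if Q i then b else c)) =
      a ^ (if P i ∧ Q i then (1 : ℝ) else 0)
        * b ^ ((if P i then (1 : ℝ) else 0) + (if Q i then 1 else 0)
          - 2 * (if P i ∧ Q i then 1 else 0))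
        * c ^ (1 - (if P i then (1 : ℝ) else 0) - (if Q i then 1 else 0)
          + (if P i ∧ Q i then 1 else 0)) := fun i => by
    by_cases hP : P i <;> by_cases hQ : Q i <;> norm_num [hP, hQ]
  simp_rw [hfactor, prod_mul_distrib, ← Real.rpow_sum_of_pos ha, ← Real.rpow_sum_of_pos hb,
    ← Real.rpow_sum_of_pos hc]
  simp only [sum_add_distrib, sum_sub_distrib, ← mul_sum, sum_boole, sum_const, card_univ,
    nsmul_eq_mul, mul_one, Nat.cast_add, Real.rpow_natCast]
  ring_nf

section Torus

variable {L : ℕ}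

def upEquiv : Site L ≃ Site L where
  toFun := upN
  invFun := dnN
  left_inv x := by simp [upN, dnN]
  right_inv x := by simp [upN, dnN]

def rtEquiv : Site L ≃ Site L where
  toFun := rtN
  invFun := lfN
  left_inv x := by simp [rtN, lfN]
  right_inv x := by simp [rtN, lfN]

@[simp] lemma dnN_upN (x : Site L) : dnN (upN x) = x := upEquiv.left_inv x

@[simp] lemma lfN_rtN (x : Site L) : lfN (rtN x) = x := rtEquiv.left_inv x

def localField (J q : ℝ) (σ : Cfg L) (y : Site L) : ℝ :=
  J * spin (σ (dnN y)) + J * spin (σ (lfN y)) + q * spin (σ y)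

lemma cosh_localField (J q : ℝ) (σ : Cfg L) (y : Site L) :
    Real.cosh (localField J q σ y) =
      if σ y ≠ σ (dnN y) then
        (if σ y ≠ σ (lfN y) then Real.cosh (2 * J - q) else Real.cosh q)
      else (if σ y ≠ σ (lfN y) then Real.cosh q else Real.cosh (2 * J + q)) := by
  rw [localField]
  cases σ y <;> cases σ (dnN y) <;> cases σ (lfN y) <;> simp only [spin] <;> norm_num <;>
    first | (congr 1; ring1) | (rw [← Real.cosh_neg]; congr 1; ring1)

variable [NeZero L]

lemma card_site : Fintype.card (Site L) = L ^ 2 := by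
  simp [ZMod.card, sq]

lemma neg_pairH_eq_sum_localField (J q : ℝ) (σ τ : Cfg L) :
    -pairH L J q σ τ = ∑ y, localField J q σ y * spin (τ y) := by
  have hup := (upEquiv.sum_comp fun y => J * spin (σ (dnN y)) * spin (τ y)).symm
  have hrt := (rtEquiv.sum_comp fun y => J * spin (σ (lfN y)) * spin (τ y)).symm
  simp only [upEquiv, rtEquiv, Equiv.coe_fn_mk, dnN_upN, lfN_rtN] at hup hrt
  simp only [pairH, localField, neg_neg, add_mul, mul_add, sum_add_distrib, hup, hrt]

lemma Zconf_eq_prod_cosh_localField (J q : ℝ) (σ : Cfg L) :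
    Zconf L J q σ = ∏ y, 2 * Real.cosh (localField J q σ y) := by
  simp_rw [Zconf, neg_pairH_eq_sum_localField, sum_exp_sum_mul_spin]

lemma card_filter_ne_upN (σ : Cfg L) :
    #{x | σ x ≠ σ (upN x)} = #{x | σ x ≠ σ (dnN x)} := by
  simp only [card_filter]
  conv_rhs => rw [← upEquiv.sum_comp]
  simp [upEquiv, ne_comm]

lemma card_filter_ne_rtN (σ : Cfg L) :
    #{x | σ x ≠ σ (rtN x)} = #{x | σ x ≠ σ (lfN x)} := by
  simp only [card_filter]
  conv_rhs => rw [← rtEquiv.sum_comp]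
  simp [rtEquiv, ne_comm]

lemma contourLen_eq_card_dnN_add_card_lfN (σ : Cfg L) :
    contourLen L σ = #{x | σ x ≠ σ (dnN x)} + #{x | σ x ≠ σ (lfN x)} := by
  rw [contourLen, card_filter_ne_upN, card_filter_ne_rtN]

end Torus

theorem stmt7_general (L : ℕ) [NeZero L] (J q : ℝ) (σ : Cfg L) :
    Zconf L J q σ =
      2 ^ (L ^ 2) * Real.cosh (2 * J - q) ^ (nDL L σ)
        * Real.cosh q ^ ((contourLen L σ : ℝ) - 2 * (nDL L σ : ℝ))
        * Real.cosh (2 * J + q) ^ (((L : ℝ) ^ 2 - contourLen L σ + nDL L σ : ℝ)) := by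
  rw [Zconf_eq_prod_cosh_localField, prod_mul_distrib, prod_const, card_univ, card_site]
  simp_rw [cosh_localField]
  rw [prod_ite_ite_eq_rpow _ _ (Real.cosh_pos _) (Real.cosh_pos _) (Real.cosh_pos _),
    ← contourLen_eq_card_dnN_add_card_lfN, card_site, nDL]
  push_cast
  ring

/-- For every `L ≥ 2`, `J, q > 0` and every configuration `σ`,
`Z_σ = 2^{L²} cosh(2J−q)^{n_dl(σ)} cosh(q)^{l(σ)−2n_dl(σ)} cosh(2J+q)^{L²−l(σ)+n_dl(σ)}`
(the last two, possibly negative, exponents are taken as real exponents). -/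
theorem stmt7 (L : ℕ) [NeZero L] (hL : 2 ≤ L) (J q : ℝ) (hJ : 0 < J) (hq : 0 < q)
    (σ : Cfg L) :
    Zconf L J q σ =
      2 ^ (L ^ 2) * Real.cosh (2 * J - q) ^ (nDL L σ)
        * Real.cosh q ^ ((contourLen L σ : ℝ) - 2 * (nDL L σ : ℝ))
        * Real.cosh (2 * J + q) ^ (((L : ℝ) ^ 2 - contourLen L σ + nDL L σ : ℝ)) :=
  stmt7_general L J q σ
end
end

section
/- In the low temperature regime with parameters k and c, with k > 1 and c > 2, there exists L₀ such that for all L ≥ L₀ and every configuration σ ∈ S different from the all-plus configuration 1 and the all-minus configuration −1, one has g(σ) > π_G(g), where g is the normalized density (which satisfies g(1) = g(−1) = 1); in particular g(σ) ≥ (5/4)^L whenever n_ur(σ) = 0 and σ ∉ {1, −1}. -/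
open Real Filter MeasureTheory

noncomputable section

/-- `δ = e^{−2q}`. -/
def deltaQ (q : ℝ) : ℝ := Real.exp (-(2 * q))

/-- The normalized density
`g(σ) = [(1+δe^{4J})/(1+δe^{−4J})]^{n_ur(σ)} · [(1+δ)/(1+δe^{−4J})]^{l(σ)−2n_ur(σ)}`
(the second, possibly negative, exponent is taken as a real exponent). -/
def gDens (L : ℕ) [NeZero L] (J q : ℝ) (σ : Cfg L) : ℝ :=
  ((1 + deltaQ q * Real.exp (4 * J)) / (1 + deltaQ q * Real.exp (-(4 * J)))) ^ (nUR L σ)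
    * ((1 + deltaQ q) / (1 + deltaQ q * Real.exp (-(4 * J))))
        ^ ((contourLen L σ : ℝ) - 2 * (nUR L σ : ℝ))


/-!
Since `e^{-H_G(τ)} = e^{2J|Λ|} e^{-2J l(τ)}` and both ground states have `l = 0`,
`π_G(g) ≤ ½ ∑_τ e^{-2J l(τ)} g(τ) = ½ ∑_τ v^{n_ur(τ)} u^{l(τ) - 2 n_ur(τ)}`, where `v ≤ 1` is
close to `δ` and `u = O(L^{-2k})`. Reading `τ` along its `L` antidiagonals, `n_ur` counts the
up-right corners between consecutive antidiagonals and `l - 2 n_ur` the spin changes inside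
them, so the sum is the trace of the `L`-th power of a transfer matrix indexed by rows of spins.
After a diagonal conjugation that favours the two constant rows its row sums are at most
`1 + v^L + O(L u)`, and `v^L ≲ δ^L = L^{-2c}`, so the trace stays bounded and `π_G(g) ≤ 7/2`.
Conversely `g(σ) ≥ 9/2` as soon as `σ` has an up-right corner; without corners a constant
antidiagonal forces the previous one to be constant, so every antidiagonal of a non-constant `σ`
carries two spin changes, `l(σ) ≥ 2L` and `g(σ) ≥ (5/4)^{2L}`.
-/

open Finset

section TransferMatrix

variable {C : Type*}

theorem prod_cyclic_mul_div_eq (T : C → C → ℝ) {τ : C → ℝ} (hτ : ∀ a, τ a ≠ 0)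
    {n : ℕ} [NeZero n] (s : ZMod n → C) :
    ∏ d : ZMod n, T (s d) (s (d + 1)) * (τ (s d) / τ (s (d + 1)))
      = ∏ d : ZMod n, T (s d) (s (d + 1)) := by
  rw [prod_mul_distrib, prod_div_distrib,
    Fintype.prod_equiv (Equiv.addRight 1) (fun d => τ (s (d + 1))) (fun d => τ (s d))
      fun _ => rfl,
    div_self (prod_ne_zero_iff.mpr fun d _ => hτ _), mul_one]

def blockScale [DecidableEq C] (K : Finset C) (s : ℝ) (a : C) : ℝ := if a ∈ K then 1 else s

theorem blockScale_pos [DecidableEq C] {K : Finset C} {s : ℝ} (hs0 : 0 < s) (a : C) :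
    0 < blockScale K s a := by
  unfold blockScale; split_ifs <;> linarith

theorem blockScale_le_one [DecidableEq C] {K : Finset C} {s : ℝ} (hs1 : s ≤ 1) (a : C) :
    blockScale K s a ≤ 1 := by
  unfold blockScale; split_ifs <;> linarith

variable [Fintype C]

theorem sum_path_prod_le [Nonempty C] (W : C → C → ℝ) {r : ℝ} (hW : ∀ a b, 0 ≤ W a b)
    (hrow : ∀ a, ∑ b, W a b ≤ r) (m : ℕ) (f : C → ℝ) (hf : ∀ a, 0 ≤ f a) :
    ∑ w : Fin (m + 1) → C, f (w 0) * ∏ i : Fin m, W (w i.castSucc) (w i.succ)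
      ≤ (∑ a, f a) * r ^ m := by
  have hr : 0 ≤ r := (sum_nonneg fun b _ => hW (Classical.arbitrary C) b).trans (hrow _)
  induction m generalizing f with
  | zero => simp [← (Equiv.funUnique (Fin 1) C).symm.sum_comp]
  | succ m ih =>
    rw [← (Fin.consEquiv fun _ => C).sum_comp, Fintype.sum_prod_type]
    simp only [Fin.consEquiv_apply, Fin.prod_univ_succ, Fin.cons_zero, Fin.cons_succ,
      ← Fin.succ_castSucc, Fin.castSucc_zero]
    calc ∑ b, ∑ w : Fin (m + 1) → C,
          f b * (W b (w 0) * ∏ i : Fin m, W (w i.castSucc) (w i.succ))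
        = ∑ w : Fin (m + 1) → C,
          (∑ b, f b * W b (w 0)) * ∏ i : Fin m, W (w i.castSucc) (w i.succ) := by
          rw [sum_comm]
          simp only [sum_mul, mul_assoc]
      _ ≤ (∑ c, ∑ b, f b * W b c) * r ^ m :=
          ih _ fun c => sum_nonneg fun b _ => mul_nonneg (hf b) (hW b c)
      _ ≤ (∑ b, f b) * r ^ (m + 1) := by
          rw [sum_comm, pow_succ', ← mul_assoc]
          refine mul_le_mul_of_nonneg_right ?_ (pow_nonneg hr m)
          rw [sum_mul]
          exact sum_le_sum fun b _ => by
            rw [← mul_sum]; exact mul_le_mul_of_nonneg_left (hrow b) (hf b)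

theorem sum_cyclic_prod_le [Nonempty C] (W : C → C → ℝ) (g : C → ℝ) {r : ℝ}
    (hW : ∀ a b, 0 ≤ W a b) (hrow : ∀ a, ∑ b, W a b ≤ r) (hcol : ∀ a b, W a b ≤ g b)
    (n : ℕ) [NeZero n] :
    ∑ s : ZMod n → C, ∏ d : ZMod n, W (s d) (s (d + 1)) ≤ (∑ b, g b) * r ^ (n - 1) := by
  obtain ⟨m, rfl⟩ : ∃ m, n = m + 1 := Nat.exists_eq_succ_of_ne_zero (NeZero.ne n)
  change ∑ w : Fin (m + 1) → C, ∏ i : Fin (m + 1), W (w i) (w (i + 1)) ≤ _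
  refine (sum_le_sum fun w _ => ?_).trans
    (sum_path_prod_le W hW hrow m g fun b => (hW b b).trans (hcol b b))
  rw [Fin.prod_univ_castSucc, Fin.last_add_one, mul_comm]
  simp only [Fin.coeSucc_eq_succ]
  exact mul_le_mul_of_nonneg_right (hcol _ _) (prod_nonneg fun i _ => hW _ _)

variable [DecidableEq C] {K : Finset C}

theorem sum_mul_blockScale_div_le {T : C → C → ℝ} {h : C → ℝ} {ρ s : ℝ}
    (hT1 : ∀ a b, T a b ≤ 1) (hTh : ∀ a, ∀ b ∉ K, T a b ≤ h b)
    (hK : ∀ a ∈ K, ∑ b ∈ K, T a b ≤ ρ) (hh : ∑ b ∈ Kᶜ, h b ≤ s ^ 2) (hs0 : 0 < s)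
    (hs1 : s ≤ 1) (hKs : K.card * s ≤ ρ) (a : C) :
    ∑ b, T a b * (blockScale K s a / blockScale K s b) ≤ ρ + s := by
  set τ := blockScale K s
  have hτa : 0 ≤ τ a / s := div_nonneg (blockScale_pos hs0 a).le hs0.le
  have hWK : ∑ b ∈ K, T a b * (τ a / τ b) = τ a * ∑ b ∈ K, T a b := by
    rw [mul_sum]
    exact sum_congr rfl fun b hb => by simp only [τ, blockScale, if_pos hb, div_one, mul_comm]
  have hWKc : ∑ b ∈ Kᶜ, T a b * (τ a / τ b) ≤ τ a / s * s ^ 2 := by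
    refine le_trans ?_ (mul_le_mul_of_nonneg_left hh hτa)
    rw [mul_sum]
    refine sum_le_sum fun b hb => ?_
    simp only [τ, blockScale, if_neg (mem_compl.mp hb), mul_comm (T a b)]
    exact mul_le_mul_of_nonneg_left (hTh a b (mem_compl.mp hb)) hτa
  rw [← sum_add_sum_compl K, hWK]
  by_cases ha : a ∈ K
  · simp only [τ, blockScale, if_pos ha] at hWKc ⊢
    have : 1 / s * s ^ 2 = s := by field_simp
    linarith [hK a ha]
  · simp only [τ, blockScale, if_neg ha] at hWKc ⊢
    have hTK : ∑ b ∈ K, T a b ≤ K.card := by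
      simpa using sum_le_sum fun b (_ : b ∈ K) => hT1 a b
    have : s / s * s ^ 2 = s * s := by field_simp
    nlinarith

/-- Conjugating `T` by `blockScale K s` leaves cyclic products unchanged and balances the row
sums between the block `K` and its complement. -/
theorem sum_cyclic_prod_le_of_block [Nonempty C] (T : C → C → ℝ) (h : C → ℝ) {ρ s : ℝ}
    (hT0 : ∀ a b, 0 ≤ T a b) (hT1 : ∀ a b, T a b ≤ 1) (hTh : ∀ a, ∀ b ∉ K, T a b ≤ h b)
    (hK : ∀ a ∈ K, ∑ b ∈ K, T a b ≤ ρ) (hh : ∑ b ∈ Kᶜ, h b ≤ s ^ 2) (hs0 : 0 < s)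
    (hs1 : s ≤ 1) (hKs : K.card * s ≤ ρ) (n : ℕ) [NeZero n] :
    ∑ f : ZMod n → C, ∏ d : ZMod n, T (f d) (f (d + 1))
      ≤ (K.card + s) * (ρ + s) ^ (n - 1) := by
  set τ := blockScale K s
  set g : C → ℝ := fun b => if b ∈ K then 1 else h b / s
  have hcol : ∀ a b, T a b * (τ a / τ b) ≤ g b := by
    intro a b
    by_cases hb : b ∈ K
    · simp only [τ, g, blockScale, if_pos hb, div_one]
      exact mul_le_one₀ (hT1 a b) (blockScale_pos hs0 a).le (blockScale_le_one hs1 a)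
    · simp only [τ, g, blockScale, if_neg hb, mul_div_assoc']
      gcongr
      exact (mul_le_of_le_one_right (hT0 a b) (blockScale_le_one hs1 a)).trans (hTh a b hb)
  have hgsum : ∑ b, g b ≤ K.card + s := by
    have hgK : ∑ b ∈ K, g b = K.card := by
      simpa using sum_congr rfl fun b hb => (if_pos hb : g b = 1)
    have hgKc : ∑ b ∈ Kᶜ, g b = (∑ b ∈ Kᶜ, h b) / s := by
      rw [sum_div]
      exact sum_congr rfl fun b hb => if_neg (mem_compl.mp hb)
    have : (∑ b ∈ Kᶜ, h b) / s ≤ s := by rw [div_le_iff₀ hs0]; nlinarith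
    rw [← sum_add_sum_compl K, hgK, hgKc]
    linarith
  have hρ : 0 ≤ ρ + s := by nlinarith [K.card.cast_nonneg (α := ℝ)]
  calc ∑ f : ZMod n → C, ∏ d : ZMod n, T (f d) (f (d + 1))
      = ∑ f : ZMod n → C, ∏ d : ZMod n, T (f d) (f (d + 1)) * (τ (f d) / τ (f (d + 1))) :=
        sum_congr rfl fun f _ =>
          (prod_cyclic_mul_div_eq T (fun a => (blockScale_pos hs0 a).ne') f).symm
    _ ≤ (∑ b, g b) * (ρ + s) ^ (n - 1) :=
        sum_cyclic_prod_le _ g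
          (fun a b => mul_nonneg (hT0 a b)
            (div_nonneg (blockScale_pos hs0 a).le (blockScale_pos hs0 b).le))
          (sum_mul_blockScale_div_le hT1 hTh hK hh hs0 hs1 hKs) hcol n
    _ ≤ (K.card + s) * (ρ + s) ^ (n - 1) := mul_le_mul_of_nonneg_right hgsum (pow_nonneg hρ _)

end TransferMatrix

theorem ZMod.forall_of_add_one_imp {n : ℕ} [NeZero n] {P : ZMod n → Prop} (a : ZMod n)
    (ha : P a) (h : ∀ d, P (d + 1) → P d) (d : ZMod n) : P d := by
  have key : ∀ m : ℕ, P (a - m) := by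
    intro m
    induction m with
    | zero => simpa using ha
    | succ m ih => exact h _ (by rwa [Nat.cast_succ, sub_add_eq_sub_sub, sub_add_cancel])
  simpa using key (a - d).val

section Rows

variable {L : ℕ} [NeZero L]

def changeSet (t : ZMod L → Bool) : Finset (ZMod L) := univ.filter fun i => t i ≠ t (i + 1)

def numChanges (t : ZMod L → Bool) : ℕ := (changeSet t).card

def numCorners (t t' : ZMod L → Bool) : ℕ :=
  (univ.filter fun i => t i ≠ t' i ∧ t i ≠ t' (i + 1)).card

def constRows (L : ℕ) [NeZero L] : Finset (ZMod L → Bool) :=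
  univ.map ⟨Function.const (ZMod L), Function.const_injective⟩

theorem mem_constRows {t : ZMod L → Bool} : t ∈ constRows L ↔ ∃ b, Function.const _ b = t := by
  simp only [constRows, Finset.mem_map, mem_univ, true_and, Function.Embedding.coeFn_mk]

theorem card_constRows : (constRows L).card = 2 := by simp [constRows]

theorem numCorners_const (b b' : Bool) :
    numCorners (Function.const (ZMod L) b) (Function.const _ b') = if b = b' then 0 else L := by
  split_ifs with h <;> simp [numCorners, h]

theorem eq_of_changeSet_eq {t t' : ZMod L → Bool} (h0 : t 0 = t' 0)
    (h : changeSet t = changeSet t') : t = t' := by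
  funext d
  refine ZMod.forall_of_add_one_imp (P := fun d => t d = t' d) 0 h0 (fun d hd => ?_) d
  have hd' : t d ≠ t (d + 1) ↔ t' d ≠ t' (d + 1) := by
    simpa [changeSet] using congrArg (d ∈ ·) h
  revert hd hd'
  cases t d <;> cases t (d + 1) <;> cases t' d <;> cases t' (d + 1) <;> simp

theorem spin_mul_spin (a b : Bool) : spin a * spin b = if a ≠ b then -1 else 1 := by
  cases a <;> cases b <;> norm_num [spin]

theorem even_numChanges (t : ZMod L → Bool) : Even (numChanges t) := by
  have hsq : ∏ i, spin (t i) * spin (t (i + 1)) = (∏ i, spin (t i)) ^ 2 := by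
    rw [prod_mul_distrib, sq,
      Fintype.prod_equiv (Equiv.addRight 1) (fun i => spin (t (i + 1))) (fun i => spin (t i))
        fun _ => rfl]
  have hpow : ∏ i, spin (t i) * spin (t (i + 1)) = (-1) ^ numChanges t := by
    simp only [spin_mul_spin, prod_ite, prod_const_one, mul_one, prod_const, numChanges,
      changeSet]
  by_contra hodd
  have h := sq_nonneg (∏ i, spin (t i))
  rw [← hsq, hpow, (Nat.not_even_iff_odd.mp hodd).neg_one_pow] at h
  norm_num at h

theorem two_le_numChanges {t : ZMod L → Bool} (ht : t ∉ constRows L) : 2 ≤ numChanges t := by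
  have hne : numChanges t ≠ 0 := by
    intro h0
    refine ht (mem_constRows.mpr ⟨t 0, ?_⟩)
    funext d
    refine (ZMod.forall_of_add_one_imp (P := fun d => t d = t 0) 0 rfl (fun d hd => ?_) d).symm
    have hd' : d ∉ changeSet t := by simp [numChanges, card_eq_zero] at h0; simp [h0]
    have : t d = t (d + 1) := by simpa [changeSet] using hd'
    exact this.trans hd
  obtain ⟨m, hm⟩ := even_numChanges t
  omega

/-- A non-constant row is determined by its value at `0` and its change set, which has at least
two elements; this bounds the sum by `2 ∑_{m ≥ 2} (L choose m) u^m`. -/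
theorem sum_compl_constRows_pow_numChanges_le {u : ℝ} (hu : 0 ≤ u) (hLu : L * u ≤ 1 / 2) :
    ∑ t ∈ (constRows L)ᶜ, u ^ numChanges t ≤ 4 * (L * u) ^ 2 := by
  set F : Finset (ZMod L) → ℝ := fun A => if 2 ≤ A.card then u ^ A.card else 0
  have hF0 : ∀ A, 0 ≤ F A := fun A => by positivity
  set φ : (ZMod L → Bool) → Bool × Finset (ZMod L) := fun t => (t 0, changeSet t)
  have hφ : Function.Injective φ := fun t t' h =>
    eq_of_changeSet_eq (Prod.ext_iff.mp h).1 (Prod.ext_iff.mp h).2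
  have hx : 0 ≤ (L : ℝ) * u := by positivity
  calc ∑ t ∈ (constRows L)ᶜ, u ^ numChanges t
      = ∑ t ∈ (constRows L)ᶜ, F (φ t).2 :=
        sum_congr rfl fun t ht => (if_pos (two_le_numChanges (mem_compl.mp ht))).symm
    _ ≤ ∑ t, F (φ t).2 := sum_le_univ_sum_of_nonneg fun t => hF0 _
    _ = ∑ p ∈ univ.image φ, F p.2 :=
        (sum_image (f := fun p => F p.2) fun t _ t' _ h => hφ h).symm
    _ ≤ ∑ p : Bool × Finset (ZMod L), F p.2 := sum_le_univ_sum_of_nonneg fun p => hF0 _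
    _ = 2 * ∑ m ∈ range (L + 1), L.choose m • (if 2 ≤ m then u ^ m else 0) := by
        simp only [Fintype.sum_prod_type, Fintype.sum_bool, ← two_mul, F]
        rw [← powerset_univ, sum_powerset_apply_card (fun m => if 2 ≤ m then u ^ m else 0),
          card_univ, ZMod.card]
    _ ≤ 2 * ∑ m ∈ range (L + 1), (if 2 ≤ m then ((L : ℝ) * u) ^ m else 0) := by
        gcongr with m
        split_ifs
        · rw [nsmul_eq_mul, mul_pow]
          exact mul_le_mul_of_nonneg_right (by exact_mod_cast Nat.choose_le_pow L m)
            (by positivity)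
        · simp
    _ = 2 * ∑ m ∈ Ico 2 (L + 1), ((L : ℝ) * u) ^ m := by
        rw [← sum_filter]
        congr 2
        ext m
        simp only [mem_filter, mem_range, mem_Ico]
        omega
    _ ≤ 2 * (((L : ℝ) * u) ^ 2 / (1 - L * u)) := by
        gcongr
        exact geom_sum_Ico_le_of_lt_one hx (by linarith)
    _ ≤ 4 * (L * u) ^ 2 := by
        rw [div_eq_mul_inv]
        have : (1 - (L : ℝ) * u)⁻¹ ≤ 2 := by
          rw [inv_le_comm₀ (by linarith) (by norm_num)]; linarith
        nlinarith [sq_nonneg ((L : ℝ) * u)]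

def rowWeight (v u : ℝ) (t t' : ZMod L → Bool) : ℝ := v ^ numCorners t t' * u ^ numChanges t'

theorem sum_prod_rowWeight_le {v u : ℝ} (hv0 : 0 ≤ v) (hv1 : v ≤ 1) (hu0 : 0 < u)
    (hLu : 4 * L * u ≤ 1) :
    ∑ f : ZMod L → ZMod L → Bool, ∏ d, rowWeight v u (f d) (f (d + 1))
      ≤ (2 + 2 * L * u) * (1 + v ^ L + 2 * L * u) ^ (L - 1) := by
  have hL : (1 : ℝ) ≤ L := by exact_mod_cast NeZero.one_le
  have hu1 : u ≤ 1 := by nlinarith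
  have hconst : ∀ t ∈ constRows L, ∑ t' ∈ constRows L, rowWeight v u t t' ≤ 1 + v ^ L := by
    intro t ht
    obtain ⟨b, rfl⟩ := mem_constRows.mp ht
    rw [constRows, sum_map]
    cases b <;> simp [rowWeight, numCorners_const, numChanges, changeSet, add_comm]
  have hnonconst : ∑ t ∈ (constRows L)ᶜ, u ^ numChanges t ≤ (2 * L * u) ^ 2 := by
    nlinarith [sum_compl_constRows_pow_numChanges_le hu0.le (L := L) (by linarith)]
  have h := sum_cyclic_prod_le_of_block (rowWeight v u) (fun t => u ^ numChanges t)
    (fun t t' => by unfold rowWeight; positivity)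
    (fun t t' => mul_le_one₀ (pow_le_one₀ hv0 hv1) (by positivity) (pow_le_one₀ hu0.le hu1))
    (fun t t' _ => mul_le_of_le_one_left (by positivity) (pow_le_one₀ hv0 hv1))
    hconst hnonconst (by positivity) (by nlinarith)
    (by rw [card_constRows]; push_cast; nlinarith [pow_nonneg hv0 L]) L
  rwa [card_constRows, Nat.cast_ofNat] at h

end Rows

theorem upN_diag {L : ℕ} (d i : ZMod L) : upN ((i, d - i) : Site L) = (i, d + 1 - i) := by
  simp only [upN]; ring_nf

theorem rtN_diag {L : ℕ} (d i : ZMod L) :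
    rtN ((i, d - i) : Site L) = (i + 1, d + 1 - (i + 1)) := by
  simp only [rtN]; ring_nf

section Diagonals

variable {L : ℕ} [NeZero L]

def diagRow (σ : Cfg L) (d : ZMod L) : ZMod L → Bool := fun i => σ (i, d - i)

def diagRowEquiv : Cfg L ≃ (ZMod L → ZMod L → Bool) where
  toFun := diagRow
  invFun f x := f (x.1 + x.2) x.1
  left_inv σ := by funext x; simp [diagRow]
  right_inv f := by funext d i; simp [diagRow]

theorem sum_site_eq_sum_diag {M : Type*} [AddCommMonoid M] (F : Site L → M) :
    ∑ x, F x = ∑ d : ZMod L, ∑ i : ZMod L, F (i, d - i) := by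
  rw [← Fintype.sum_prod_type']
  exact Fintype.sum_equiv ⟨fun x => (x.1 + x.2, x.1), fun p => (p.2, p.1 - p.2),
    fun x => by simp, fun p => by simp⟩ _ _ fun x => by simp

theorem nUR_eq_sum_numCorners (σ : Cfg L) :
    nUR L σ = ∑ d, numCorners (diagRow σ d) (diagRow σ (d + 1)) := by
  simp only [nUR, numCorners, card_filter]
  rw [sum_site_eq_sum_diag]
  simp only [upN_diag, rtN_diag, diagRow]
  rfl

theorem contourLen_eq (σ : Cfg L) :
    contourLen L σ = 2 * nUR L σ + ∑ d, numChanges (diagRow σ (d + 1)) := by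
  have hbonds : ∀ a b c : Bool, ((if a ≠ b then 1 else 0) + if a ≠ c then 1 else 0 : ℕ)
      = 2 * (if a ≠ b ∧ a ≠ c then 1 else 0) + if b ≠ c then 1 else 0 := by decide
  simp only [contourLen, nUR, numChanges, changeSet, card_filter, ← sum_add_distrib, mul_sum,
    hbonds]
  rw [sum_add_distrib, sum_site_eq_sum_diag (fun x => if σ (upN x) ≠ σ (rtN x) then 1 else 0)]
  simp only [upN_diag, rtN_diag, diagRow]
  rfl

theorem two_mul_nUR_le_contourLen (σ : Cfg L) : 2 * nUR L σ ≤ contourLen L σ := by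
  rw [contourLen_eq]; omega

theorem sum_pow_nUR_mul_pow_eq (v u : ℝ) :
    ∑ σ : Cfg L, v ^ nUR L σ * u ^ (contourLen L σ - 2 * nUR L σ)
      = ∑ f : ZMod L → ZMod L → Bool, ∏ d, rowWeight v u (f d) (f (d + 1)) := by
  refine Fintype.sum_equiv diagRowEquiv _ _ fun σ => ?_
  rw [contourLen_eq, Nat.add_sub_cancel_left, nUR_eq_sum_numCorners, ← prod_pow_eq_pow_sum,
    ← prod_pow_eq_pow_sum, ← prod_mul_distrib]
  rfl

theorem diagRow_eq_const_of_succ {σ : Cfg L} (hn : nUR L σ = 0) {d : ZMod L} {b : Bool}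
    (h : diagRow σ (d + 1) = Function.const _ b) : diagRow σ d = Function.const _ b := by
  funext i
  have hcorner : ¬ (σ (i, d - i) ≠ σ (upN (i, d - i)) ∧ σ (i, d - i) ≠ σ (rtN (i, d - i))) := by
    rw [nUR, card_eq_zero, filter_eq_empty_iff] at hn
    exact hn (mem_univ _)
  rw [upN_diag, rtN_diag, show σ (i, d + 1 - i) = b from congrFun h i,
    show σ (i + 1, d + 1 - (i + 1)) = b from congrFun h (i + 1), and_self, not_not] at hcorner
  exact hcorner

theorem diagRow_not_mem_constRows {σ : Cfg L} (hn : nUR L σ = 0) (hp : σ ≠ plusCfg L)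
    (hm : σ ≠ minusCfg L) (d : ZMod L) : diagRow σ d ∉ constRows L := by
  intro hd
  obtain ⟨b, hb⟩ := mem_constRows.mp hd
  have hall : ∀ e, diagRow σ e = Function.const _ b :=
    ZMod.forall_of_add_one_imp d hb.symm fun e he => diagRow_eq_const_of_succ hn he
  have hσ : σ = Function.const _ b := by
    funext x
    simpa [diagRow] using congrFun (hall (x.1 + x.2)) x.1
  cases b
  · exact hm hσ
  · exact hp hσ

theorem two_mul_le_contourLen {σ : Cfg L} (hn : nUR L σ = 0) (hp : σ ≠ plusCfg L)
    (hm : σ ≠ minusCfg L) : 2 * L ≤ contourLen L σ := by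
  rw [contourLen_eq, hn, mul_zero, zero_add]
  calc 2 * L = ∑ _d : ZMod L, 2 := by simp [ZMod.card, mul_comm]
    _ ≤ _ := sum_le_sum fun d _ => two_le_numChanges (diagRow_not_mem_constRows hn hp hm _)

end Diagonals

theorem plusCfg_eq_const {L : ℕ} : plusCfg L = Function.const _ true := rfl

theorem minusCfg_eq_const {L : ℕ} : minusCfg L = Function.const _ false := rfl

section Energy

variable {L : ℕ} [NeZero L]

theorem contourLen_const (b : Bool) : contourLen L (Function.const _ b) = 0 := by
  simp [contourLen]

theorem nUR_const (b : Bool) : nUR L (Function.const _ b) = 0 := by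
  simp [nUR]

theorem isingH_eq (J : ℝ) (σ : Cfg L) :
    isingH L J σ = -J * (2 * Fintype.card (Site L) - 2 * contourLen L σ) := by
  have hbond : ∀ a b c : Bool, spin a * (spin b + spin c)
      = 2 - 2 * (((if a ≠ b then 1 else 0 : ℕ) : ℝ) + ((if a ≠ c then 1 else 0 : ℕ) : ℝ)) := by
    intro a b c
    cases a <;> cases b <;> cases c <;> norm_num [spin]
  simp only [isingH, hbond, sum_sub_distrib, ← mul_sum, sum_add_distrib, ← Nat.cast_sum,
    ← card_filter, contourLen, sum_const, card_univ, nsmul_eq_mul, Nat.cast_add]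
  ring

theorem exp_neg_isingH (J : ℝ) (σ : Cfg L) :
    Real.exp (-isingH L J σ)
      = Real.exp (2 * J * Fintype.card (Site L)) * Real.exp (-(2 * J)) ^ contourLen L σ := by
  rw [← Real.exp_nat_mul, ← Real.exp_add, isingH_eq]
  ring_nf

theorem two_mul_exp_le_Zg (J : ℝ) : 2 * Real.exp (2 * J * Fintype.card (Site L)) ≤ Zg L J := by
  have hne : plusCfg L ≠ minusCfg L := fun h => by simpa [plusCfg, minusCfg] using congrFun h 0
  have hpair := sum_le_univ_sum_of_nonneg (s := {plusCfg L, minusCfg L})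
    fun σ => (Real.exp_pos (-isingH L J σ)).le
  rw [sum_pair hne, exp_neg_isingH, exp_neg_isingH, plusCfg_eq_const, minusCfg_eq_const,
    contourLen_const, contourLen_const] at hpair
  simpa [two_mul, Zg] using hpair

theorem sum_piG_mul_le (J : ℝ) {g : Cfg L → ℝ} (hg : ∀ τ, 0 ≤ g τ) :
    ∑ τ, piG L J τ * g τ ≤ (∑ τ, Real.exp (-(2 * J)) ^ contourLen L τ * g τ) / 2 := by
  set C := Real.exp (2 * J * Fintype.card (Site L))
  set S := ∑ τ, Real.exp (-(2 * J)) ^ contourLen L τ * g τ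
  have hC : 0 < C := Real.exp_pos _
  have hZ : 2 * C ≤ Zg L J := two_mul_exp_le_Zg J
  have hS : 0 ≤ S := sum_nonneg fun τ _ => mul_nonneg (by positivity) (hg τ)
  have hpi : ∑ τ, piG L J τ * g τ = C * S / Zg L J := by
    simp only [S, piG, exp_neg_isingH, mul_sum, sum_div]
    exact sum_congr rfl fun τ _ => by ring
  rw [hpi, div_le_div_iff₀ (by linarith) two_pos]
  nlinarith

end Energy

theorem one_add_pow_le_exp_mul {x : ℝ} (hx : 0 ≤ x) (n : ℕ) :
    (1 + x) ^ n ≤ Real.exp (n * x) := by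
  rw [Real.exp_nat_mul]
  exact pow_le_pow_left₀ (by linarith) (by linarith [Real.add_one_le_exp x]) n

theorem deltaQ_pos (q : ℝ) : 0 < deltaQ q := Real.exp_pos _

theorem deltaQ_le_one {q : ℝ} (hq : 0 ≤ q) : deltaQ q ≤ 1 :=
  Real.exp_le_one_iff.mpr (by linarith)

theorem half_le_deltaQ {q : ℝ} (hq : q ≤ 1 / 4) : 1 / 2 ≤ deltaQ q := by
  linarith [Real.add_one_le_exp (-(2 * q)), show deltaQ q = Real.exp (-(2 * q)) from rfl]

theorem exp_neg_four_mul (J : ℝ) : Real.exp (-(4 * J)) = Real.exp (-(2 * J)) ^ 2 := by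
  rw [← Real.exp_nat_mul]; ring_nf

theorem exp_four_mul (J : ℝ) : Real.exp (4 * J) = (Real.exp (-(2 * J)) ^ 2)⁻¹ := by
  rw [← exp_neg_four_mul, ← Real.exp_neg, neg_neg]

def cornerFactor (J q : ℝ) : ℝ :=
  (1 + deltaQ q * Real.exp (4 * J)) / (1 + deltaQ q * Real.exp (-(4 * J)))

def bondFactor (J q : ℝ) : ℝ := (1 + deltaQ q) / (1 + deltaQ q * Real.exp (-(4 * J)))

def cornerWeight (J q : ℝ) : ℝ := cornerFactor J q * Real.exp (-(2 * J)) ^ 2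

def bondWeight (J q : ℝ) : ℝ := bondFactor J q * Real.exp (-(2 * J))

theorem cornerFactor_pos (J q : ℝ) : 0 < cornerFactor J q := by
  have := deltaQ_pos q; unfold cornerFactor; positivity

theorem bondFactor_pos (J q : ℝ) : 0 < bondFactor J q := by
  have := deltaQ_pos q; unfold bondFactor; positivity

section Density

variable {L : ℕ} [NeZero L]

theorem gDens_eq (J q : ℝ) (σ : Cfg L) :
    gDens L J q σ
      = cornerFactor J q ^ nUR L σ * bondFactor J q ^ (contourLen L σ - 2 * nUR L σ) := by
  rw [gDens, ← cornerFactor, ← bondFactor, ← Real.rpow_natCast (bondFactor J q),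
    Nat.cast_sub (two_mul_nUR_le_contourLen σ)]
  push_cast
  rfl

theorem gDens_nonneg (J q : ℝ) (σ : Cfg L) : 0 ≤ gDens L J q σ := by
  have := cornerFactor_pos J q
  have := bondFactor_pos J q
  rw [gDens_eq]
  positivity

theorem gDens_plusCfg (J q : ℝ) : gDens L J q (plusCfg L) = 1 := by
  simp [gDens_eq, plusCfg_eq_const, nUR_const, contourLen_const]

theorem gDens_minusCfg (J q : ℝ) : gDens L J q (minusCfg L) = 1 := by
  simp [gDens_eq, minusCfg_eq_const, nUR_const, contourLen_const]

theorem exp_pow_mul_gDens (J q : ℝ) (σ : Cfg L) :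
    Real.exp (-(2 * J)) ^ contourLen L σ * gDens L J q σ
      = cornerWeight J q ^ nUR L σ * bondWeight J q ^ (contourLen L σ - 2 * nUR L σ) := by
  obtain ⟨m, hm⟩ := Nat.exists_eq_add_of_le (two_mul_nUR_le_contourLen σ)
  rw [gDens_eq, cornerWeight, bondWeight, hm, Nat.add_sub_cancel_left, pow_add, pow_mul]
  ring

end Density

section Estimates

variable {J q : ℝ}

theorem cornerWeight_eq (J q : ℝ) :
    cornerWeight J q
      = (Real.exp (-(2 * J)) ^ 2 + deltaQ q) / (1 + deltaQ q * Real.exp (-(2 * J)) ^ 2) := by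
  have := deltaQ_pos q
  rw [cornerWeight, cornerFactor, exp_four_mul, exp_neg_four_mul]
  field_simp

theorem nine_halves_le_cornerFactor (hq0 : 0 ≤ q) (hq : q ≤ 1 / 4)
    (hJ : Real.exp (-(2 * J)) ≤ 1 / 4) : 9 / 2 ≤ cornerFactor J q := by
  have hδ := half_le_deltaQ hq
  have hδ1 := deltaQ_le_one hq0
  have hE := Real.exp_pos (-(2 * J))
  have hE2 : Real.exp (-(2 * J)) ^ 2 ≤ 1 / 16 := by nlinarith
  have h16 : 16 ≤ (Real.exp (-(2 * J)) ^ 2)⁻¹ := by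
    rw [le_inv_comm₀ (by norm_num) (by positivity)]; linarith
  rw [cornerFactor, exp_four_mul, exp_neg_four_mul, le_div_iff₀ (by positivity)]
  nlinarith

theorem five_fourths_le_bondFactor (hq0 : 0 ≤ q) (hq : q ≤ 1 / 4)
    (hJ : Real.exp (-(2 * J)) ≤ 1 / 4) : 5 / 4 ≤ bondFactor J q := by
  have hδ := half_le_deltaQ hq
  have hδ1 := deltaQ_le_one hq0
  have hE := Real.exp_pos (-(2 * J))
  rw [bondFactor, exp_neg_four_mul, le_div_iff₀ (by positivity)]
  nlinarith

theorem bondFactor_le_two (hq0 : 0 ≤ q) : bondFactor J q ≤ 2 := by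
  have := deltaQ_le_one hq0
  have := deltaQ_pos q
  rw [bondFactor, div_le_iff₀ (by positivity)]
  nlinarith [Real.exp_pos (-(4 * J))]

theorem cornerWeight_le_one (hq0 : 0 ≤ q) (hJ : Real.exp (-(2 * J)) ≤ 1) :
    cornerWeight J q ≤ 1 := by
  have hδ := deltaQ_le_one hq0
  have := deltaQ_pos q
  have hE := Real.exp_pos (-(2 * J))
  rw [cornerWeight_eq, div_le_one (by positivity)]
  nlinarith [mul_nonneg (sub_nonneg.mpr hδ) (sub_nonneg.mpr (pow_le_one₀ hE.le hJ (n := 2)))]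

theorem cornerWeight_le (hq : q ≤ 1 / 4) :
    cornerWeight J q ≤ deltaQ q * (1 + 2 * Real.exp (-(2 * J)) ^ 2) := by
  have := half_le_deltaQ hq
  have hE := Real.exp_pos (-(2 * J))
  rw [cornerWeight_eq, div_le_iff₀ (by positivity)]
  nlinarith [pow_pos hE 2, mul_pos (pow_pos hE 2) (deltaQ_pos q)]

theorem natCast_mul_cornerWeight_pow_le {L : ℕ} (hq : q ≤ 1 / 4)
    (hJ : 2 * L * Real.exp (-(2 * J)) ^ 2 ≤ 1) (hδ : 6 * L * deltaQ q ^ L ≤ 1) :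
    L * cornerWeight J q ^ L ≤ 1 / 2 := by
  have hδ0 := pow_nonneg (deltaQ_pos q).le L
  have hw0 : 0 ≤ cornerWeight J q := by
    have := cornerFactor_pos J q; unfold cornerWeight; positivity
  have hw : cornerWeight J q ^ L ≤ deltaQ q ^ L * Real.exp 1 := by
    calc cornerWeight J q ^ L ≤ (deltaQ q * (1 + 2 * Real.exp (-(2 * J)) ^ 2)) ^ L :=
          pow_le_pow_left₀ hw0 (cornerWeight_le hq) L
      _ ≤ deltaQ q ^ L * Real.exp (L * (2 * Real.exp (-(2 * J)) ^ 2)) := by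
          rw [mul_pow]
          exact mul_le_mul_of_nonneg_left (one_add_pow_le_exp_mul (by positivity) L) hδ0
      _ ≤ deltaQ q ^ L * Real.exp 1 := by
          gcongr
          linarith
  calc L * cornerWeight J q ^ L ≤ L * deltaQ q ^ L * Real.exp 1 := by
        rw [mul_assoc]; exact mul_le_mul_of_nonneg_left hw (Nat.cast_nonneg L)
    _ ≤ 1 / 6 * 3 :=
        mul_le_mul (by linarith) (by linarith [Real.exp_one_lt_d9]) (Real.exp_pos 1).le
          (by norm_num)
    _ = 1 / 2 := by norm_num

end Estimates

section Bounds

variable {L : ℕ} [NeZero L] {J q : ℝ}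

theorem sum_piG_mul_gDens_le (hq0 : 0 ≤ q) (hq : q ≤ 1 / 4)
    (hJ : 8 * L ^ 2 * Real.exp (-(2 * J)) ≤ 1) (hδ : 6 * L * deltaQ q ^ L ≤ 1) :
    ∑ τ, piG L J τ * gDens L J q τ ≤ 7 / 2 := by
  set E := Real.exp (-(2 * J))
  set v := cornerWeight J q
  set u := bondWeight J q
  have hL : (1 : ℝ) ≤ L := by exact_mod_cast NeZero.one_le
  have hE0 : 0 < E := Real.exp_pos _
  have hLE : L * E ≤ 1 / 8 := by nlinarith
  have hv0 : 0 ≤ v := by have := cornerFactor_pos J q; unfold v cornerWeight; positivity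
  have hv1 : v ≤ 1 := cornerWeight_le_one hq0 (by nlinarith)
  have hvL : L * v ^ L ≤ 1 / 2 := natCast_mul_cornerWeight_pow_le hq (by nlinarith) hδ
  have hu0 : 0 < u := mul_pos (bondFactor_pos J q) hE0
  have hu : u ≤ 2 * E := mul_le_mul_of_nonneg_right (bondFactor_le_two hq0) hE0.le
  have hsum : ∑ τ, E ^ contourLen L τ * gDens L J q τ
      ≤ (2 + 2 * L * u) * (1 + v ^ L + 2 * L * u) ^ (L - 1) := by
    rw [sum_congr rfl fun τ _ => exp_pow_mul_gDens J q τ, sum_pow_nUR_mul_pow_eq]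
    exact sum_prod_rowWeight_le hv0 hv1 hu0 (by nlinarith)
  have hpow : (1 + v ^ L + 2 * L * u) ^ (L - 1) ≤ Real.exp 1 := by
    calc (1 + v ^ L + 2 * L * u) ^ (L - 1) ≤ (1 + (v ^ L + 2 * L * u)) ^ L := by
          rw [← add_assoc]
          exact pow_le_pow_right₀ (by nlinarith [pow_nonneg hv0 L]) (Nat.sub_le L 1)
      _ ≤ Real.exp (L * (v ^ L + 2 * L * u)) := one_add_pow_le_exp_mul (by positivity) L
      _ ≤ Real.exp 1 := Real.exp_le_exp.mpr (by nlinarith)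
  calc ∑ τ, piG L J τ * gDens L J q τ ≤ (∑ τ, E ^ contourLen L τ * gDens L J q τ) / 2 :=
        sum_piG_mul_le J (gDens_nonneg J q)
    _ ≤ (2 + 2 * L * u) * Real.exp 1 / 2 := by
        gcongr
        exact hsum.trans (mul_le_mul_of_nonneg_left hpow (by positivity))
    _ ≤ 5 / 2 * (14 / 5) / 2 := by
        gcongr
        · nlinarith
        · linarith [Real.exp_one_lt_d9]
    _ = 7 / 2 := by norm_num

theorem five_fourths_pow_le_gDens (hq0 : 0 ≤ q) (hq : q ≤ 1 / 4)
    (hJ : Real.exp (-(2 * J)) ≤ 1 / 4) {σ : Cfg L} (hn : nUR L σ = 0) (hp : σ ≠ plusCfg L)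
    (hm : σ ≠ minusCfg L) : (5 / 4 : ℝ) ^ (2 * L) ≤ gDens L J q σ := by
  have hB := five_fourths_le_bondFactor hq0 hq hJ
  rw [gDens_eq, hn, pow_zero, one_mul, mul_zero, Nat.sub_zero]
  calc (5 / 4 : ℝ) ^ (2 * L) ≤ bondFactor J q ^ (2 * L) := pow_le_pow_left₀ (by norm_num) hB _
    _ ≤ bondFactor J q ^ contourLen L σ :=
        pow_le_pow_right₀ (by linarith) (two_mul_le_contourLen hn hp hm)

theorem seven_halves_lt_gDens (hq0 : 0 ≤ q) (hq : q ≤ 1 / 4)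
    (hJ : Real.exp (-(2 * J)) ≤ 1 / 4) (hL : 3 ≤ L) {σ : Cfg L} (hp : σ ≠ plusCfg L)
    (hm : σ ≠ minusCfg L) : 7 / 2 < gDens L J q σ := by
  by_cases hn : nUR L σ = 0
  · calc (7 / 2 : ℝ) < (5 / 4) ^ 6 := by norm_num
      _ ≤ (5 / 4) ^ (2 * L) := pow_le_pow_right₀ (by norm_num) (by omega)
      _ ≤ gDens L J q σ := five_fourths_pow_le_gDens hq0 hq hJ hn hp hm
  · have hA := nine_halves_le_cornerFactor hq0 hq hJ
    have hB : 1 ≤ bondFactor J q := by linarith [five_fourths_le_bondFactor hq0 hq hJ]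
    rw [gDens_eq]
    calc (7 / 2 : ℝ) < cornerFactor J q ^ 1 * 1 := by linarith
      _ ≤ _ := by
        gcongr
        · linarith
        · omega
        · exact one_le_pow₀ hB

end Bounds

theorem tendsto_exp_mul_log_natCast {a : ℝ} (ha : a < 0) :
    Tendsto (fun n : ℕ => Real.exp (a * Real.log n)) atTop (nhds 0) :=
  Real.tendsto_exp_atBot.comp
    ((Real.tendsto_log_atTop.comp tendsto_natCast_atTop_atTop).const_mul_atTop_of_neg ha)

theorem eventually_lowTemperature {k c : ℝ} (hk : 1 < k) (hc : 2 < c) :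
    ∀ᶠ L : ℕ in atTop, 3 ≤ L ∧ c * Real.log L / L ≤ 1 / 4 ∧
      8 * (L : ℝ) ^ 2 * Real.exp (-(2 * (k * Real.log L))) ≤ 1 ∧
      6 * (L : ℝ) * deltaQ (c * Real.log L / L) ^ L ≤ 1 := by
  have hq : Tendsto (fun n : ℕ => c * Real.log n / n) atTop (nhds 0) := by
    simpa [mul_div_assoc] using
      ((Real.tendsto_pow_log_div_mul_add_atTop 1 0 1 one_ne_zero).comp
        tendsto_natCast_atTop_atTop).const_mul c
  filter_upwards [eventually_ge_atTop 3,
    hq.eventually (eventually_le_nhds (show (0 : ℝ) < 1 / 4 by norm_num)),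
    (tendsto_exp_mul_log_natCast (a := 2 - 2 * k) (by linarith)).eventually
      (eventually_le_nhds (show (0 : ℝ) < 1 / 8 by norm_num)),
    (tendsto_exp_mul_log_natCast (a := 1 - 2 * c) (by linarith)).eventually
      (eventually_le_nhds (show (0 : ℝ) < 1 / 6 by norm_num))] with n hn hqn hJn hδn
  have hexp : Real.exp (Real.log n) = n := Real.exp_log (by exact_mod_cast (by omega : 0 < n))
  have hsq : (n : ℝ) ^ 2 * Real.exp (-(2 * (k * Real.log n)))
      = Real.exp ((2 - 2 * k) * Real.log n) := by
    rw [show (2 - 2 * k) * Real.log n = (2 : ℕ) * Real.log n + -(2 * (k * Real.log n)) by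
      push_cast; ring, Real.exp_add, Real.exp_nat_mul, hexp]
  have hpow : (n : ℝ) * deltaQ (c * Real.log n / n) ^ n
      = Real.exp ((1 - 2 * c) * Real.log n) := by
    rw [deltaQ, ← Real.exp_nat_mul, show (1 - 2 * c) * Real.log n
      = Real.log n + n * -(2 * (c * Real.log n / n)) by field_simp; ring, Real.exp_add, hexp]
  refine ⟨hn, hqn, ?_, ?_⟩
  · rw [mul_assoc, hsq]; linarith
  · rw [mul_assoc, hpow]; linarith

/-- In the low temperature regime `J = k log L`, `q = c (log L)/L` with
`k > 1` and `c > 2`, for all large enough `L`: `g(1) = g(−1) = 1`; every configuration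
`σ ∉ {1, −1}` satisfies `g(σ) > π_G(g)`; and in particular `g(σ) ≥ (5/4)^L` whenever
`n_ur(σ) = 0` and `σ ∉ {1, −1}`. -/
theorem stmt10 (k c : ℝ) (hk : 1 < k) (hc : 2 < c) :
    ∃ L₀ : ℕ, ∀ L : ℕ, L₀ ≤ L → ∀ (h2 : 2 ≤ L),
      haveI : NeZero L := ⟨by omega⟩
      (gDens L (k * Real.log L) (c * Real.log L / L) (plusCfg L) = 1 ∧
        gDens L (k * Real.log L) (c * Real.log L / L) (minusCfg L) = 1) ∧
      (∀ σ : Cfg L, σ ≠ plusCfg L → σ ≠ minusCfg L →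
        (∑ τ : Cfg L,
            piG L (k * Real.log L) τ * gDens L (k * Real.log L) (c * Real.log L / L) τ)
          < gDens L (k * Real.log L) (c * Real.log L / L) σ) ∧
      (∀ σ : Cfg L, σ ≠ plusCfg L → σ ≠ minusCfg L → nUR L σ = 0 →
        ((5 : ℝ) / 4) ^ L ≤ gDens L (k * Real.log L) (c * Real.log L / L) σ) := by
  obtain ⟨L₀, hL₀⟩ := eventually_atTop.mp (eventually_lowTemperature hk hc)
  refine ⟨L₀, fun L hL h2 => ?_⟩
  obtain ⟨hL3, hq, hJ, hδ⟩ := hL₀ L hL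
  have : NeZero L := ⟨by omega⟩
  have hL1 : (1 : ℝ) ≤ L := by exact_mod_cast NeZero.one_le
  have hq0 : 0 ≤ c * Real.log L / L := by have := Real.log_nonneg hL1; positivity
  have hE : Real.exp (-(2 * (k * Real.log L))) ≤ 1 / 4 := by
    nlinarith [mul_le_mul_of_nonneg_right (one_le_pow₀ hL1 : (1 : ℝ) ≤ L ^ 2)
      (Real.exp_pos (-(2 * (k * Real.log L)))).le]
  refine ⟨⟨gDens_plusCfg _ _, gDens_minusCfg _ _⟩, fun σ hp hm => ?_, fun σ hp hm hn => ?_⟩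
  · exact (sum_piG_mul_gDens_le hq0 hq hJ hδ).trans_lt
      (seven_halves_lt_gDens hq0 hq hE hL3 hp hm)
  · exact (pow_le_pow_right₀ (by norm_num) (by omega)).trans
      (five_fourths_pow_le_gDens hq0 hq hE hn hp hm)
end
end
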